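/- arXiv:2312.10369 — 3 statements merged into one kernel-verified Lean document; each statement's English description precedes it below -/
import Mathlib

section
/- Let (X,d) be a metric space, let S ⊆ X be a finite nonempty set, let c, r ∈ X, let ρ ≥ 0, α > 1 and D ≥ 0 be reals. Suppose there exists a point v₀ ∈ X with d(v₀,c) ≤ D and d(v₀,r) ≤ ρ·d(v₀,c), and suppose the set P = {v ∈ S : d(v,c) < D} satisfies |P| ≤ |S|/α. Then Σ_{v∈S} d(v,r) ≤ (1 + (1+ρ)·α/(α−1)) · Σ_{v∈S} d(v,c). -/
/-!
Every point of `S` outside `P` is at distance at least `D` from `c`, and at least a fraction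
`1 - 1/α` of `S` lies outside `P`; this Markov-type count gives `|S| D ≤ α/(α-1) ∑ d(v,c)`.
On the other hand the detour through `v₀` gives `d(v,r) ≤ d(v,c) + (1+ρ) D` for every `v`,
and summing over `S` yields the bound.
-/

open Finset

theorem Finset.card_filter_not_lt_mul_le_sum {ι : Type*} (s : Finset ι) (f : ι → ℝ) (D : ℝ)
    (hf : ∀ i ∈ s, 0 ≤ f i) :
    (#(s.filter fun i => ¬ f i < D) : ℝ) * D ≤ ∑ i ∈ s, f i :=
  calc (#(s.filter fun i => ¬ f i < D) : ℝ) * D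
      = #(s.filter fun i => ¬ f i < D) • D := (nsmul_eq_mul _ _).symm
    _ ≤ ∑ i ∈ s.filter (fun i => ¬ f i < D), f i :=
        card_nsmul_le_sum _ _ _ fun _ hi => not_lt.mp (mem_filter.mp hi).2
    _ ≤ ∑ i ∈ s, f i :=
        sum_le_sum_of_subset_of_nonneg (filter_subset _ _) fun i hi _ => hf i hi

theorem Finset.card_mul_le_sum_of_card_filter_lt_le {ι : Type*} (s : Finset ι) (f : ι → ℝ)
    {D α : ℝ} (hf : ∀ i ∈ s, 0 ≤ f i) (hD : 0 ≤ D) (hα : 1 < α)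
    (hsmall : (#(s.filter fun i => f i < D) : ℝ) ≤ #s / α) :
    #s * D ≤ α / (α - 1) * ∑ i ∈ s, f i := by
  have hα₀ : 0 < α - 1 := sub_pos.mpr hα
  have hcard : (#s : ℝ) = #(s.filter fun i => f i < D) + #(s.filter fun i => ¬ f i < D) := by
    exact_mod_cast (card_filter_add_card_filter_not (s := s) (fun i => f i < D)).symm
  have hlarge : (#s - #s / α) * D ≤ ∑ i ∈ s, f i :=
    calc (#s - #s / α) * D ≤ #(s.filter fun i => ¬ f i < D) * D := by
          gcongr; linarith
      _ ≤ ∑ i ∈ s, f i := s.card_filter_not_lt_mul_le_sum f D hf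
  rw [div_mul_eq_mul_div, le_div_iff₀ hα₀]
  calc #s * D * (α - 1) = (#s - #s / α) * D * α := by field_simp
    _ ≤ α * ∑ i ∈ s, f i := by rw [mul_comm α]; gcongr

theorem dist_le_dist_add_of_dist_le {X : Type*} [PseudoMetricSpace X] {c r v₀ : X} {ρ D : ℝ}
    (hρ : 0 ≤ ρ) (hv₀c : dist v₀ c ≤ D) (hv₀r : dist v₀ r ≤ ρ * dist v₀ c) (v : X) :
    dist v r ≤ dist v c + (1 + ρ) * D := by
  have hv₀r' : dist v₀ r ≤ ρ * D := hv₀r.trans (by gcongr)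
  calc dist v r ≤ dist v c + dist c v₀ + dist v₀ r := dist_triangle4 v c v₀ r
    _ ≤ dist v c + D + ρ * D := by rw [dist_comm c v₀]; gcongr
    _ = dist v c + (1 + ρ) * D := by ring

theorem sum_dist_bound_general {X : Type*} [MetricSpace X]
    (S : Finset X) (c r : X) (ρ α D : ℝ)
    (hρ : 0 ≤ ρ) (hα : 1 < α)
    (v₀ : X) (hv₀c : dist v₀ c ≤ D) (hv₀r : dist v₀ r ≤ ρ * dist v₀ c)
    (hP : ((S.filter fun v => dist v c < D).card : ℝ) ≤ (S.card : ℝ) / α) :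
    ∑ v ∈ S, dist v r ≤ (1 + (1 + ρ) * α / (α - 1)) * ∑ v ∈ S, dist v c := by
  have hcount : #S * D ≤ α / (α - 1) * ∑ v ∈ S, dist v c :=
    S.card_mul_le_sum_of_card_filter_lt_le (dist · c) (fun _ _ => dist_nonneg)
      (dist_nonneg.trans hv₀c) hα hP
  calc ∑ v ∈ S, dist v r ≤ ∑ v ∈ S, (dist v c + (1 + ρ) * D) :=
        sum_le_sum fun v _ => dist_le_dist_add_of_dist_le hρ hv₀c hv₀r v
    _ = ∑ v ∈ S, dist v c + (1 + ρ) * (#S * D) := by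
        rw [sum_add_distrib, sum_const, nsmul_eq_mul]; ring
    _ ≤ ∑ v ∈ S, dist v c + (1 + ρ) * (α / (α - 1) * ∑ v ∈ S, dist v c) := by
        gcongr
    _ = (1 + (1 + ρ) * α / (α - 1)) * ∑ v ∈ S, dist v c := by ring

/-- Let `(X,d)` be a metric space, `S ⊆ X` finite and nonempty, `c, r ∈ X`, and reals
`ρ ≥ 0`, `α > 1`, `D ≥ 0`. If some `v₀ ∈ X` satisfies `d(v₀,c) ≤ D` and
`d(v₀,r) ≤ ρ·d(v₀,c)`, and the set `P = {v ∈ S : d(v,c) < D}` satisfies `|P| ≤ |S|/α`,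
then `∑_{v∈S} d(v,r) ≤ (1 + (1+ρ)·α/(α−1)) · ∑_{v∈S} d(v,c)`. -/
theorem sum_dist_bound {X : Type*} [MetricSpace X] [DecidableEq X]
    (S : Finset X) (hS : S.Nonempty) (c r : X) (ρ α D : ℝ)
    (hρ : 0 ≤ ρ) (hα : 1 < α) (hD : 0 ≤ D)
    (v₀ : X) (hv₀c : dist v₀ c ≤ D) (hv₀r : dist v₀ r ≤ ρ * dist v₀ c)
    (hP : ((S.filter fun v => dist v c < D).card : ℝ) ≤ (S.card : ℝ) / α) :
    ∑ v ∈ S, dist v r ≤ (1 + (1 + ρ) * α / (α - 1)) * ∑ v ∈ S, dist v c :=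
  sum_dist_bound_general S c r ρ α D hρ hα v₀ hv₀c hv₀r hP
end

section
/- Let R = {c, c'} be the committee output by the EAR run with committee size k = 2 (so p = ⌈n/2⌉), and suppose n ≥ 2 is even (so α := n/p = 2). Then min_{r ∈ R} Σ_{v ∈ V} d(v,r) ≤ (8 + √41) · min_{c* ∈ C} Σ_{v ∈ V} d(v,c*), i.e., at least one of the two committee members has single-winner metric distortion at most γ(2) = 8 + √41 ≈ 14.4. -/
open scoped Classical

/-- An election in a metric space: a finite set `V` of voters, a finite set `C` of
candidates, and for each voter a strict ranking of the candidates (position `1` is most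
preferred, positions range over `{1, …, |C|}`) that is consistent with the metric. -/
structure Election (X : Type*) [MetricSpace X] where
  V : Finset X
  C : Finset X
  rank : X → X → ℕ
  rank_bijOn : ∀ v ∈ V, Set.BijOn (rank v) ↑C (Set.Icc 1 C.card)
  rank_metric : ∀ v ∈ V, ∀ c ∈ C, ∀ c' ∈ C, dist v c < dist v c' → rank v c < rank v c'

/-- The state of Algorithm 1 (EAR): the uncovered voters `U`, the list `R` of candidates
selected so far (in order of selection), and the neighborhoods `N`. -/
structure EARState (X : Type*) where
  U : Finset X
  R : List X
  N : X → Finset X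

variable {X : Type*} [MetricSpace X]

/-- The `τ`-th ranked candidate of voter `v`. -/
noncomputable def tauCand (E : Election X) (v : X) (τ : ℕ) : X :=
  if h : ∃ c ∈ E.C, E.rank v c = τ then h.choose else v

/-- One step of Algorithm 1: processing voter `v` at tolerance `τ`, with threshold `p`. -/
noncomputable def voterStep (E : Election X) (p τ : ℕ) (st : EARState X) (v : X) :
    EARState X :=
  if v ∈ st.U then
    let c := tauCand E v τ
    if c ∈ st.R then st
    else
      let Nc := insert v (st.N c)
      if Nc.card = p then
        { U := st.U \ Nc
          R := st.R ++ [c]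
          N := fun c' => if c' = c then Nc else if c' ∈ st.R then st.N c' else st.N c' \ Nc }
      else
        { st with N := fun c' => if c' = c then Nc else st.N c' }
  else st

/-- The state at termination of the main loop of Algorithm 1 (EAR) with threshold `p`,
where `orders τ` is the (arbitrary) order in which the voters are processed in the
iteration with tolerance `τ`. -/
noncomputable def EARrun (E : Election X) (p : ℕ) (orders : ℕ → List X) : EARState X :=
  (List.range E.C.card).foldl
    (fun st i => (orders (i + 1)).foldl (voterStep E p (i + 1)) st)
    ⟨E.V, [], fun _ => ∅⟩

/-- Each round processes every voter exactly once, in an arbitrary order. -/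
def ValidOrders (E : Election X) (orders : ℕ → List X) : Prop :=
  ∀ τ, (orders τ).Nodup ∧ (orders τ).toFinset = E.V

/-- `p = ⌈n / k⌉`. -/
def earP (E : Election X) (k : ℕ) : ℕ := (E.V.card + k - 1) / k

/-- `R[S]`: the selected candidates whose neighborhood (at termination) meets `S`. -/
noncomputable def reps (st : EARState X) (S : Finset X) : Finset X :=
  st.R.toFinset.filter fun r => (st.N r ∩ S).Nonempty

/-- `d_sum(S, x) = ∑_{v ∈ S} d(v, x)`. -/
noncomputable def dsum (S : Finset X) (x : X) : ℝ := ∑ v ∈ S, dist v x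

/-- `d_sum(S, C') = ∑_{v ∈ S} min_{c ∈ C'} d(v, c)`. -/
noncomputable def dsumSet (S : Finset X) (C' : Finset X) : ℝ :=
  ∑ v ∈ S, ⨅ c : C', dist v (c : X)

/-! The first candidate `c₁` that EAR selects, say at tolerance `τ + 1`, is among the top `τ + 1`
choices of `p` voters, while every candidate is among the top `τ` choices of fewer than `p` voters.
Fix any candidate `c`, let `v₀` be the voter of the first kind closest to `c`, `x₀ = d(v₀, c)` and
`D = d(c₁, c)`. By the triangle inequality a voter within `(D - 2 x₀) / 2` of `c` ranks `c` before
`v₀` ranks `c₁`, hence among its top `τ`; so at least `p` voters are farther away, and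
`p (D - 2 x₀) / 2 ≤ ∑ d(v, c)`. Together with `p x₀ ≤ ∑ d(v, c)` this gives `p D ≤ 4 ∑ d(v, c)`,
and as there are `n ≤ 2 p` voters, `∑ d(v, c₁) ≤ ∑ d(v, c) + n D ≤ 9 ∑ d(v, c)`: the first
selected candidate already has distortion at most `9 < 8 + √41`. -/

namespace Election

variable (E : Election X) {v w c c' : X}

lemma one_le_rank (hv : v ∈ E.V) (hc : c ∈ E.C) : 1 ≤ E.rank v c :=
  ((E.rank_bijOn v hv).mapsTo hc).1

lemma rank_le_card (hv : v ∈ E.V) (hc : c ∈ E.C) : E.rank v c ≤ E.C.card :=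
  ((E.rank_bijOn v hv).mapsTo hc).2

lemma tauCand_mem_and_rank_eq (hv : v ∈ E.V) {τ : ℕ} (h1 : 1 ≤ τ) (h2 : τ ≤ E.C.card) :
    tauCand E v τ ∈ E.C ∧ E.rank v (tauCand E v τ) = τ := by
  have hex : ∃ c ∈ E.C, E.rank v c = τ :=
    (E.rank_bijOn v hv).surjOn (Set.mem_Icc.2 ⟨h1, h2⟩)
  rw [tauCand, dif_pos hex]
  exact hex.choose_spec

lemma dist_le_of_rank_le (hv : v ∈ E.V) (hc : c ∈ E.C) (hc' : c' ∈ E.C)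
    (h : E.rank v c ≤ E.rank v c') : dist v c ≤ dist v c' :=
  not_lt.1 fun hlt => (E.rank_metric v hv c' hc' c hc hlt).not_ge h

lemma card_filter_rank_le (hv : v ∈ E.V) (hc : c ∈ E.C) :
    (E.C.filter fun a => E.rank v a ≤ E.rank v c).card = E.rank v c := by
  have hbij := E.rank_bijOn v hv
  refine (Finset.card_nbij (E.rank v) ?_ ?_ ?_).trans (Nat.card_Icc 1 _)
  · intro a ha
    simp only [Finset.coe_filter, Set.mem_ofPred_eq, Finset.coe_Icc, Set.mem_Icc] at ha ⊢
    exact ⟨E.one_le_rank hv ha.1, ha.2⟩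
  · exact hbij.injOn.mono fun a ha => (Finset.mem_filter.1 ha).1
  · intro t ht
    simp only [Finset.coe_Icc, Set.mem_Icc] at ht
    obtain ⟨a, ha, rfl⟩ := hbij.surjOn
      (Set.mem_Icc.2 ⟨ht.1, ht.2.trans (E.rank_le_card hv hc)⟩)
    exact ⟨a, by simpa using ⟨ha, ht.2⟩, rfl⟩

lemma rank_lt_rank_of_forall_dist (hv : v ∈ E.V) (hw : w ∈ E.V) (hc : c ∈ E.C)
    (hc' : c' ∈ E.C) (h : ∀ a ∈ E.C, dist w a ≤ dist w c → dist v a < dist v c') :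
    E.rank w c < E.rank v c' := by
  have hsub : (E.C.filter fun a => E.rank w a ≤ E.rank w c) ⊆
      (E.C.filter fun a => E.rank v a ≤ E.rank v c').erase c' := by
    intro a ha
    obtain ⟨haC, har⟩ := Finset.mem_filter.1 ha
    have hlt := E.rank_metric v hv a haC c' hc' (h a haC (E.dist_le_of_rank_le hw haC hc har))
    exact Finset.mem_erase.2 ⟨fun hac => hlt.ne (congrArg _ hac), Finset.mem_filter.2 ⟨haC, hlt.le⟩⟩
  have hcard := Finset.card_le_card hsub
  rw [Finset.card_erase_of_mem (Finset.mem_filter.2 ⟨hc', le_refl (E.rank v c')⟩),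
    E.card_filter_rank_le hw hc, E.card_filter_rank_le hv hc'] at hcard
  have := E.one_le_rank hv hc'
  omega

lemma rank_lt_rank_of_dist_add_two_mul_lt (hv : v ∈ E.V) (hw : w ∈ E.V) (hc : c ∈ E.C)
    (hc' : c' ∈ E.C) (h : dist v c + 2 * dist w c < dist v c') :
    E.rank w c < E.rank v c' := by
  refine E.rank_lt_rank_of_forall_dist hv hw hc hc' fun a _ ha => ?_
  linarith [dist_triangle v c a, dist_triangle_left c a w]

end Election

lemma dsum_nonneg (S : Finset X) (x : X) : 0 ≤ dsum S x :=
  Finset.sum_nonneg fun _ _ => dist_nonneg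

lemma mul_le_dsum_of_le_card_filter {S : Finset X} {x : X} {k : ℕ} {t : ℝ}
    (h : k ≤ (S.filter fun w => t ≤ dist w x).card) : k * t ≤ dsum S x := by
  rcases lt_or_ge t 0 with ht | ht
  · exact (mul_nonpos_of_nonneg_of_nonpos k.cast_nonneg ht.le).trans (dsum_nonneg S x)
  calc (k : ℝ) * t ≤ (S.filter fun w => t ≤ dist w x).card * t := by gcongr
    _ ≤ ∑ w ∈ S.filter fun w => t ≤ dist w x, dist w x := by
      simpa using Finset.card_nsmul_le_sum _ (dist · x) t fun w hw => (Finset.mem_filter.1 hw).2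
    _ ≤ dsum S x :=
      Finset.sum_le_sum_of_subset_of_nonneg (Finset.filter_subset _ _) fun _ _ _ => dist_nonneg

lemma dsum_le_dsum_add_card_mul_dist (S : Finset X) (x y : X) :
    dsum S x ≤ dsum S y + S.card * dist x y := by
  calc dsum S x ≤ ∑ v ∈ S, (dist v y + dist y x) :=
        Finset.sum_le_sum fun v _ => dist_triangle v y x
    _ = dsum S y + S.card * dist x y := by
      rw [Finset.sum_add_distrib, Finset.sum_const, nsmul_eq_mul, dist_comm y x, dsum]

def approvers (E : Election X) (c : X) (τ : ℕ) : Finset X :=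
  E.V.filter fun v => E.rank v c ≤ τ

lemma approvers_mono (E : Election X) {c : X} {τ τ' : ℕ} (h : τ ≤ τ') :
    approvers E c τ ⊆ approvers E c τ' :=
  fun _ hv => Finset.mem_filter.2 ⟨(Finset.mem_filter.1 hv).1, (Finset.mem_filter.1 hv).2.trans h⟩

/-- What EAR guarantees for the first candidate it selects, say at tolerance `τ + 1`. -/
def FirstToQuota (E : Election X) (p : ℕ) (c : X) : Prop :=
  c ∈ E.C ∧ ∃ τ, p ≤ (approvers E c (τ + 1)).card ∧ ∀ c' ∈ E.C, (approvers E c' τ).card < p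

namespace FirstToQuota

variable {E : Election X} {p : ℕ} {c₁ c : X}

lemma mul_dist_le (hq : FirstToQuota E p c₁) (hn : 2 * p ≤ E.V.card + 1) (hc : c ∈ E.C) :
    p * dist c₁ c ≤ 4 * dsum E.V c := by
  obtain ⟨hc₁, τ, hquota, hfew⟩ := hq
  have hA : (approvers E c₁ (τ + 1)).Nonempty :=
    Finset.card_pos.1 (by have := hfew c hc; omega)
  obtain ⟨v₀, hv₀, hmin⟩ := Finset.exists_min_image _ (dist · c) hA
  obtain ⟨hv₀V, hv₀r⟩ := Finset.mem_filter.1 hv₀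
  have hnear : p * dist v₀ c ≤ dsum E.V c := by
    refine mul_le_dsum_of_le_card_filter (hquota.trans (Finset.card_le_card fun w hw => ?_))
    exact Finset.mem_filter.2 ⟨(Finset.mem_filter.1 hw).1, hmin w hw⟩
  set t := (dist c₁ c - 2 * dist v₀ c) / 2 with ht
  have hclose : (E.V.filter fun w => ¬ t ≤ dist w c) ⊆ approvers E c τ := by
    intro w hw
    obtain ⟨hwV, hwt⟩ := Finset.mem_filter.1 hw
    have := E.rank_lt_rank_of_dist_add_two_mul_lt hv₀V hwV hc hc₁
      (by linarith [not_le.1 hwt, ht, dist_triangle_left c₁ c v₀])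
    exact Finset.mem_filter.2 ⟨hwV, by omega⟩
  have hfar : p * t ≤ dsum E.V c := by
    refine mul_le_dsum_of_le_card_filter ?_
    have := Finset.card_filter_add_card_filter_not (s := E.V) fun w => t ≤ dist w c
    have := (Finset.card_le_card hclose).trans_lt (hfew c hc)
    omega
  have : (p : ℝ) * t = (p * dist c₁ c - 2 * (p * dist v₀ c)) / 2 := by ring
  linarith

theorem dsum_le (hq : FirstToQuota E p c₁) (hn : E.V.card ≤ 2 * p) (hn' : 2 * p ≤ E.V.card + 1)
    (hc : c ∈ E.C) : dsum E.V c₁ ≤ 9 * dsum E.V c := by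
  have hcard : (E.V.card : ℝ) ≤ 2 * p := by exact_mod_cast hn
  have := mul_le_mul_of_nonneg_right hcard (dist_nonneg (x := c₁) (y := c))
  linarith [dsum_le_dsum_add_card_mul_dist E.V c₁ c, hq.mul_dist_le hn' hc]

end FirstToQuota

section Run

variable {E : Election X} {p : ℕ}

lemma R_subset_voterStep (τ : ℕ) (st : EARState X) (v : X) :
    st.R ⊆ (voterStep E p τ st v).R := by
  simp only [voterStep]
  split_ifs <;> simp

lemma R_subset_foldl_voterStep (τ : ℕ) (l : List X) (st : EARState X) :
    st.R ⊆ (l.foldl (voterStep E p τ) st).R := by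
  induction l generalizing st with
  | nil => exact List.Subset.refl _
  | cons v l ih => exact List.Subset.trans (R_subset_voterStep τ st v) (ih _)

/-- The invariant of the main loop before the first selection, in the round with tolerance
`i + 1`, once the voters of `P` have been processed in it. -/
def NoSelectionYet (E : Election X) (p i : ℕ) (P : Finset X) (st : EARState X) : Prop :=
  st.R = [] ∧ st.U = E.V ∧ ∀ c ∈ E.C, (st.N c).card < p ∧
    approvers E c i ∪ (approvers E c (i + 1) ∩ P) ⊆ st.N c ∧ st.N c ⊆ approvers E c (i + 1)

namespace NoSelectionYet

variable {i : ℕ} {P : Finset X} {st : EARState X}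

lemma step (h : NoSelectionYet E p i P st) {v : X} (hv : v ∈ E.V) (hi : i + 1 ≤ E.C.card) :
    NoSelectionYet E p i (insert v P) (voterStep E p (i + 1) st v) ∨
      ∃ c ∈ (voterStep E p (i + 1) st v).R, FirstToQuota E p c := by
  obtain ⟨hR, hU, hN⟩ := h
  obtain ⟨hcC, hvc⟩ := E.tauCand_mem_and_rank_eq hv (Nat.le_add_left 1 i) hi
  have hlower : ∀ c', approvers E c' i ∪ (approvers E c' (i + 1) ∩ insert v P) ⊆
      insert v (approvers E c' i ∪ (approvers E c' (i + 1) ∩ P)) := by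
    intro c' w
    simp only [Finset.mem_union, Finset.mem_inter, Finset.mem_insert]
    tauto
  rw [voterStep, if_pos (hU ▸ hv), if_neg (by simp [hR])]
  dsimp only
  generalize tauCand E v (i + 1) = c at hcC hvc ⊢
  have hNc : insert v (st.N c) ⊆ approvers E c (i + 1) :=
    Finset.insert_subset (Finset.mem_filter.2 ⟨hv, hvc.le⟩) (hN c hcC).2.2
  split_ifs with hcard
  · refine Or.inr ⟨c, by simp, hcC, i, hcard ▸ Finset.card_le_card hNc, fun c' hc' => ?_⟩
    exact (Finset.card_le_card (Finset.subset_union_left.trans (hN c' hc').2.1)).trans_lt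
      (hN c' hc').1
  refine Or.inl ⟨hR, hU, fun c' hc' => ?_⟩
  obtain ⟨hcard', hlow', hup'⟩ := hN c' hc'
  by_cases hc'c : c' = c
  · subst hc'c
    dsimp only
    rw [if_pos rfl]
    refine ⟨lt_of_le_of_ne ?_ hcard, (hlower c').trans (Finset.insert_subset_insert v hlow'), hNc⟩
    exact (Finset.card_insert_le v _).trans hcard'
  dsimp only
  rw [if_neg hc'c]
  refine ⟨hcard', fun w hw => ?_, hup'⟩
  rcases Finset.mem_insert.1 (hlower c' hw) with rfl | hw'
  -- `w`'s candidate at tolerance `i + 1` is `c ≠ c'`, so `w` approves `c'` already at tolerance `i`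
  · refine hlow' (Finset.mem_union_left _ (Finset.mem_filter.2 ⟨hv, ?_⟩))
    rcases Finset.mem_union.1 hw with hv' | hv'
    · exact (Finset.mem_filter.1 hv').2
    have hr := (Finset.mem_filter.1 (Finset.mem_inter.1 hv').1).2
    refine Nat.le_of_lt_succ (lt_of_le_of_ne hr fun heq => hc'c ?_)
    exact (E.rank_bijOn w hv).injOn hc' hcC (heq.trans hvc.symm)
  · exact hlow' hw'

lemma foldl (l : List X) (hl : ∀ v ∈ l, v ∈ E.V) (hi : i + 1 ≤ E.C.card)
    (h : NoSelectionYet E p i P st) :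
    NoSelectionYet E p i (P ∪ l.toFinset) (l.foldl (voterStep E p (i + 1)) st) ∨
      ∃ c ∈ (l.foldl (voterStep E p (i + 1)) st).R, FirstToQuota E p c := by
  induction l generalizing P st with
  | nil => simpa using Or.inl h
  | cons v l ih =>
    rw [List.foldl_cons, List.toFinset_cons, Finset.union_insert, ← Finset.insert_union]
    rcases h.step (hl v List.mem_cons_self) hi with h' | ⟨c, hc, hq⟩
    · exact ih (fun w hw => hl w (List.mem_cons_of_mem v hw)) h'
    · exact Or.inr ⟨c, R_subset_foldl_voterStep _ l _ hc, hq⟩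

lemma next_round (h : NoSelectionYet E p i E.V st) : NoSelectionYet E p (i + 1) ∅ st := by
  obtain ⟨hR, hU, hN⟩ := h
  refine ⟨hR, hU, fun c hc => ⟨(hN c hc).1, fun w hw => (hN c hc).2.1 ?_,
    (hN c hc).2.2.trans (approvers_mono E (Nat.le_succ _))⟩⟩
  simp only [Finset.inter_empty, Finset.union_empty] at hw
  exact Finset.mem_union_right _ (Finset.mem_inter.2 ⟨hw, (Finset.mem_filter.1 hw).1⟩)

end NoSelectionYet

variable (E p) in
noncomputable def earRounds (orders : ℕ → List X) (k : ℕ) : EARState X :=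
  (List.range k).foldl (fun st i => (orders (i + 1)).foldl (voterStep E p (i + 1)) st)
    ⟨E.V, [], fun _ => ∅⟩

lemma noSelectionYet_or_exists_earRounds {orders : ℕ → List X} (ho : ValidOrders E orders)
    (hp : 0 < p) {k : ℕ} (hk : k ≤ E.C.card) :
    NoSelectionYet E p k ∅ (earRounds E p orders k) ∨
      ∃ c ∈ (earRounds E p orders k).R, FirstToQuota E p c := by
  induction k with
  | zero =>
    refine Or.inl ⟨rfl, rfl, fun c hc => ⟨hp, fun w hw => ?_, Finset.empty_subset _⟩⟩
    simp only [Finset.inter_empty, Finset.union_empty] at hw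
    obtain ⟨hwV, hw0⟩ := Finset.mem_filter.1 hw
    exact absurd (E.one_le_rank hwV hc) (by omega)
  | succ k ih =>
    have hround : earRounds E p orders (k + 1) =
        (orders (k + 1)).foldl (voterStep E p (k + 1)) (earRounds E p orders k) := by
      simp only [earRounds, List.range_succ, List.foldl_append, List.foldl_cons, List.foldl_nil]
    have horders : ∀ v ∈ orders (k + 1), v ∈ E.V := fun v hv =>
      (ho (k + 1)).2 ▸ List.mem_toFinset.2 hv
    rw [hround]
    rcases ih (by omega) with h | ⟨c, hc, hq⟩
    · rcases h.foldl (orders (k + 1)) horders hk with h' | h'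
      · rw [Finset.empty_union, (ho (k + 1)).2] at h'
        exact Or.inl h'.next_round
      · exact Or.inr h'
    · exact Or.inr ⟨c, R_subset_foldl_voterStep _ _ _ hc, hq⟩

theorem exists_firstToQuota_mem_EARrun {orders : ℕ → List X} (ho : ValidOrders E orders)
    (hp : 0 < p) (hpn : p ≤ E.V.card) (hC : E.C.Nonempty) :
    ∃ c ∈ (EARrun E p orders).R, FirstToQuota E p c := by
  refine (noSelectionYet_or_exists_earRounds ho hp le_rfl).resolve_left fun ⟨_, _, hN⟩ => ?_
  obtain ⟨c, hc⟩ := hC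
  have hall : E.V ⊆ (earRounds E p orders E.C.card).N c := fun w hw =>
    (hN c hc).2.1 (Finset.mem_union_left _ (Finset.mem_filter.2 ⟨hw, E.rank_le_card hw hc⟩))
  have := Finset.card_le_card hall
  have := (hN c hc).1
  omega

end Run

theorem ear_two_committee_distortion_general {X : Type*} [MetricSpace X] (E : Election X)
    (orders : ℕ → List X) (ho : ValidOrders E orders)
    (Rfin : Finset X) (hsub : (EARrun E (earP E 2) orders).R.toFinset ⊆ Rfin)
    (hRC : Rfin ⊆ E.C) (hRcard : Rfin.card = 2)
    (hn2 : 2 ≤ E.V.card) :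
    ∃ r ∈ Rfin, ∀ c ∈ E.C,
      ∑ v ∈ E.V, dist v r ≤ (8 + Real.sqrt 41) * ∑ v ∈ E.V, dist v c := by
  have hp : E.V.card ≤ 2 * earP E 2 ∧ 2 * earP E 2 ≤ E.V.card + 1 := by
    unfold earP
    omega
  obtain ⟨r, hr⟩ := Finset.card_pos.1 (hRcard ▸ two_pos)
  obtain ⟨c₁, hc₁, hq⟩ :=
    exists_firstToQuota_mem_EARrun (p := earP E 2) ho (by omega) (by omega) ⟨r, hRC hr⟩
  refine ⟨c₁, hsub (List.mem_toFinset.2 hc₁), fun c hc => ?_⟩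
  have h41 : (1 : ℝ) ≤ Real.sqrt 41 := Real.one_le_sqrt.2 (by norm_num)
  calc dsum E.V c₁ ≤ 9 * dsum E.V c := hq.dsum_le hp.1 hp.2 hc
    _ ≤ (8 + Real.sqrt 41) * dsum E.V c :=
      mul_le_mul_of_nonneg_right (by linarith) (dsum_nonneg E.V c)

/-- Let `R = {c, c'}` be the committee output by the EAR run with committee size `k = 2`
(so `p = ⌈n/2⌉`), and assume `n ≥ 2` is even. Then
`min_{r ∈ R} ∑_{v∈V} d(v,r) ≤ (8 + √41) · min_{c* ∈ C} ∑_{v∈V} d(v,c*)`, i.e., at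
least one of the two committee members has single-winner metric distortion at most
`γ(2) = 8 + √41 ≈ 14.4`. -/
theorem ear_two_committee_distortion {X : Type*} [MetricSpace X] (E : Election X)
    (orders : ℕ → List X) (ho : ValidOrders E orders)
    (Rfin : Finset X) (hsub : (EARrun E (earP E 2) orders).R.toFinset ⊆ Rfin)
    (hRC : Rfin ⊆ E.C) (hRcard : Rfin.card = 2)
    (hn2 : 2 ≤ E.V.card) (hneven : Even E.V.card) :
    ∃ r ∈ Rfin, ∀ c ∈ E.C,
      ∑ v ∈ E.V, dist v r ≤ (8 + Real.sqrt 41) * ∑ v ∈ E.V, dist v c :=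
  ear_two_committee_distortion_general E orders ho Rfin hsub hRC hRcard hn2
end

section
/- (Simple single-winner rule with constant metric distortion.) Suppose n ≥ 2 is even. Consider the following voting rule: let τ be the smallest tolerance such that some candidate c is ranked in the top τ positions by at least ⌈n/2⌉ voters (break ties arbitrarily); remove those ⌈n/2⌉ voters; let τ' be the smallest tolerance such that some candidate c' is ranked in the top τ' positions by all of the remaining ⌊n/2⌋ voters (ties broken arbitrarily); output the one w of {c, c'} that is preferred to the other by at least half of all n voters. Then Σ_{v ∈ V} d(v,w) ≤ 44 · min_{c* ∈ C} Σ_{v ∈ V} d(v,c*), i.e., this rule has metric distortion at most 44 for the single-winner election (V, C, ≻_V). -/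
open scoped Classical

/-- The set of candidates ranked in the top `τ` by a voter `a` has exactly `τ` elements,
provided `τ ≤ |C|`. -/
private lemma filter_rank_card {X : Type*} [MetricSpace X] (E : Election X)
    {a : X} (ha : a ∈ E.V) {τ : ℕ} (hτm : τ ≤ E.C.card) :
    (E.C.filter (fun x => E.rank a x ≤ τ)).card = τ := by
  have hbij := E.rank_bijOn a ha
  have himg : (E.C.filter (fun x => E.rank a x ≤ τ)).image (E.rank a) = Finset.Icc 1 τ := by
    ext j
    simp only [Finset.mem_image, Finset.mem_filter, Finset.mem_Icc]
    constructor
    · rintro ⟨x, ⟨hxC, hxr⟩, rfl⟩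
      exact ⟨(Set.mem_Icc.mp (hbij.mapsTo hxC)).1, hxr⟩
    · rintro ⟨h1, h2⟩
      obtain ⟨x, hxC, hx⟩ := hbij.surjOn (Set.mem_Icc.mpr ⟨h1, le_trans h2 hτm⟩)
      exact ⟨x, ⟨hxC, by omega⟩, hx⟩
  have hinj : Set.InjOn (E.rank a) ↑(E.C.filter (fun x => E.rank a x ≤ τ)) :=
    hbij.injOn.mono (fun x hx =>
      Finset.mem_coe.mpr (Finset.mem_filter.mp (Finset.mem_coe.mp hx)).1)
  rw [← Finset.card_image_of_injOn hinj, himg, Nat.card_Icc]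
  omega

/-- Key geometric lemma: if voter `a` ranks `cstar` at position `≥ τ` and voter `u`
ranks `c` in the top `τ`, then `d(u,c) ≤ d(u,a) + d(a,cstar)`. -/
private lemma key_bound {X : Type*} [MetricSpace X] (E : Election X)
    {τ : ℕ} {a u c cstar : X}
    (ha : a ∈ E.V) (hu : u ∈ E.V) (hc : c ∈ E.C) (hcs : cstar ∈ E.C)
    (hra : τ ≤ E.rank a cstar) (hru : E.rank u c ≤ τ) :
    dist u c ≤ dist u a + dist a cstar := by
  have hτm : τ ≤ E.C.card :=
    hra.trans (Set.mem_Icc.mp ((E.rank_bijOn a ha).mapsTo hcs)).2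
  set T := E.C.filter (fun x => E.rank a x ≤ τ) with hTdef
  have hTcard : T.card = τ := filter_rank_card E ha hτm
  obtain ⟨x, hxT, hx⟩ : ∃ x ∈ T, dist u c ≤ dist u x := by
    by_contra hcon
    push_neg at hcon
    have hrank : ∀ x ∈ T, E.rank u x ≤ τ - 1 := by
      intro x hxT
      have hxC : x ∈ E.C := (Finset.mem_filter.mp hxT).1
      have := E.rank_metric u hu x hxC c hc (hcon x hxT)
      omega
    have himg : T.image (E.rank u) ⊆ Finset.Icc 1 (τ - 1) := by
      intro j hj
      obtain ⟨x, hxT', rfl⟩ := Finset.mem_image.mp hj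
      have hxC : x ∈ E.C := (Finset.mem_filter.mp hxT').1
      exact Finset.mem_Icc.mpr
        ⟨(Set.mem_Icc.mp ((E.rank_bijOn u hu).mapsTo hxC)).1, hrank x hxT'⟩
    have hinj : Set.InjOn (E.rank u) ↑T :=
      (E.rank_bijOn u hu).injOn.mono (fun x hx =>
        Finset.mem_coe.mpr (Finset.mem_filter.mp (Finset.mem_coe.mp hx)).1)
    have h1 : T.card ≤ (Finset.Icc 1 (τ - 1)).card := by
      rw [← Finset.card_image_of_injOn hinj]
      exact Finset.card_le_card himg
    rw [hTcard, Nat.card_Icc] at h1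
    have h2 : 1 ≤ E.rank u c := (Set.mem_Icc.mp ((E.rank_bijOn u hu).mapsTo hc)).1
    omega
  have hxC : x ∈ E.C := (Finset.mem_filter.mp hxT).1
  have hxr : E.rank a x ≤ τ := (Finset.mem_filter.mp hxT).2
  have h2 : dist a x ≤ dist a cstar := by
    by_contra h
    push_neg at h
    have := E.rank_metric a ha cstar hcs x hxC h
    omega
  calc dist u c ≤ dist u x := hx
    _ ≤ dist u a + dist a x := dist_triangle u a x
    _ ≤ dist u a + dist a cstar := by linarith

/-- If at least half the voters (weakly) prefer `y` to `x` (in distance), then the total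
distance to `y` is at most `5` times the total distance to `x`. -/
private lemma majority_bound {X : Type*} [MetricSpace X] (V M : Finset X) {x y : X}
    (hM : M ⊆ V) (hn : V.card ≤ 2 * M.card)
    (hpref : ∀ v ∈ M, dist v y ≤ dist v x) :
    ∑ v ∈ V, dist v y ≤ 5 * ∑ v ∈ V, dist v x := by
  have hMx : ∑ v ∈ M, dist v x ≤ ∑ v ∈ V, dist v x :=
    Finset.sum_le_sum_of_subset_of_nonneg hM (fun i _ _ => dist_nonneg)
  have hd : (M.card : ℝ) * dist x y ≤ 2 * ∑ v ∈ M, dist v x := by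
    calc (M.card : ℝ) * dist x y = ∑ _v ∈ M, dist x y := by
          rw [Finset.sum_const, nsmul_eq_mul]
      _ ≤ ∑ v ∈ M, 2 * dist v x := Finset.sum_le_sum (fun v hv => by
          have h1 := dist_triangle x v y
          have h2 := hpref v hv
          rw [dist_comm x v] at h1
          linarith)
      _ = 2 * ∑ v ∈ M, dist v x := by rw [Finset.mul_sum]
  have hdn : (V.card : ℝ) * dist x y ≤ 4 * ∑ v ∈ V, dist v x := by
    have hc : (V.card : ℝ) ≤ 2 * (M.card : ℝ) := by exact_mod_cast hn
    nlinarith [dist_nonneg (x := x) (y := y)]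
  calc ∑ v ∈ V, dist v y ≤ ∑ v ∈ V, (dist v x + dist x y) :=
        Finset.sum_le_sum (fun v _ => by
          have := dist_triangle v x y; linarith)
    _ = ∑ v ∈ V, dist v x + (V.card : ℝ) * dist x y := by
        rw [Finset.sum_add_distrib, Finset.sum_const, nsmul_eq_mul]
    _ ≤ 5 * ∑ v ∈ V, dist v x := by linarith

/-- **A simple single-winner rule with metric distortion at most 44.** Suppose `n ≥ 2`
is even. Let `τ` be the smallest tolerance such that some candidate `c` is ranked in the
top `τ` positions by at least `⌈n/2⌉` voters (ties broken arbitrarily); remove a set `W`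
of `⌈n/2⌉` such voters; let `τ'` be the smallest tolerance such that some candidate `c'`
is ranked in the top `τ'` positions by all of the remaining `⌊n/2⌋` voters (ties broken
arbitrarily); output the one `w ∈ {c, c'}` preferred to the other by at least half of
all `n` voters. Then `∑_{v∈V} d(v,w) ≤ 44 · min_{c*∈C} ∑_{v∈V} d(v,c*)`. -/
theorem simple_rule_distortion {X : Type*} [MetricSpace X] (E : Election X)
    (hn2 : 2 ≤ E.V.card) (hneven : Even E.V.card)
    -- the first candidate `c`, found at the smallest possible tolerance `τ`
    (τ : ℕ) (c : X) (hcC : c ∈ E.C)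
    (hcmaj : (E.V.card + 1) / 2 ≤ (E.V.filter fun v => E.rank v c ≤ τ).card)
    (hτmin : ∀ τ₀ < τ, ∀ c₀ ∈ E.C,
      (E.V.filter fun v => E.rank v c₀ ≤ τ₀).card < (E.V.card + 1) / 2)
    -- the removed set `W` of `⌈n/2⌉` voters who rank `c` in their top `τ` positions
    (W : Finset X) (hW : W ⊆ E.V.filter fun v => E.rank v c ≤ τ)
    (hWcard : W.card = (E.V.card + 1) / 2)
    -- the second candidate `c'`, found at the smallest possible tolerance `τ'`
    -- for the remaining `⌊n/2⌋` voters
    (τ' : ℕ) (c' : X) (hc'C : c' ∈ E.C)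
    (hc'all : ∀ v ∈ E.V \ W, E.rank v c' ≤ τ')
    (hτ'min : ∀ τ₀ < τ', ∀ c₀ ∈ E.C, ¬ ∀ v ∈ E.V \ W, E.rank v c₀ ≤ τ₀)
    -- the winner `w`: the one of `c, c'` preferred by at least half of all voters
    (w : X)
    (hw : (w = c ∧ E.V.card ≤ 2 * (E.V.filter fun v => E.rank v c ≤ E.rank v c').card) ∨
          (w = c' ∧ E.V.card ≤ 2 * (E.V.filter fun v => E.rank v c' ≤ E.rank v c).card)) :
    ∀ cstar ∈ E.C, ∑ v ∈ E.V, dist v w ≤ 44 * ∑ v ∈ E.V, dist v cstar := by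
  intro cstar hcstar
  obtain ⟨k, hk⟩ := hneven
  have hSnonneg : (0:ℝ) ≤ ∑ v ∈ E.V, dist v cstar :=
    Finset.sum_nonneg fun v _ => dist_nonneg
  -- τ ≥ 1
  have hτ1 : 1 ≤ τ := by
    by_contra h
    push_neg at h
    interval_cases τ
    have hemp : (E.V.filter fun v => E.rank v c ≤ 0) = ∅ := by
      apply Finset.filter_eq_empty_iff.mpr
      intro v hv
      have := (Set.mem_Icc.mp ((E.rank_bijOn v hv).mapsTo hcC)).1
      omega
    rw [hemp] at hcmaj
    simp only [Finset.card_empty] at hcmaj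
    omega
  -- the set A of voters ranking cstar at position ≥ τ
  set A := E.V.filter (fun v => τ ≤ E.rank v cstar) with hAdef
  have hsmall := hτmin (τ - 1) (by omega) cstar hcstar
  have hAeq : A = E.V.filter (fun v => ¬ E.rank v cstar ≤ τ - 1) := by
    rw [hAdef]
    ext v
    simp only [Finset.mem_filter]
    constructor
    · rintro ⟨h1, h2⟩; exact ⟨h1, by omega⟩
    · rintro ⟨h1, h2⟩; exact ⟨h1, by omega⟩
  have hcount := Finset.card_filter_add_card_filter_not
    (s := E.V) (p := fun v => E.rank v cstar ≤ τ - 1)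
  have hAcompl : (E.V.filter fun v => E.rank v cstar ≤ τ - 1).card + A.card = E.V.card := by
    rw [hAeq]; exact hcount
  have hAcard : E.V.card ≤ 2 * A.card := by omega
  have hWV : W ⊆ E.V := hW.trans (Finset.filter_subset _ _)
  have hWrank : ∀ u ∈ W, E.rank u c ≤ τ := fun u hu => (Finset.mem_filter.mp (hW hu)).2
  have hAne : A.Nonempty := Finset.card_pos.mp (by omega)
  have hWne : W.Nonempty := Finset.card_pos.mp (by omega)
  obtain ⟨a₀, ha₀A, ha₀min⟩ := Finset.exists_min_image A (fun v => dist v cstar) hAne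
  obtain ⟨u₀, hu₀W, hu₀min⟩ := Finset.exists_min_image W (fun v => dist v cstar) hWne
  have ha₀V : a₀ ∈ E.V := (Finset.mem_filter.mp ha₀A).1
  have hra₀ : τ ≤ E.rank a₀ cstar := (Finset.mem_filter.mp ha₀A).2
  -- sum lower bounds via minimal elements
  have hqa : (A.card : ℝ) * dist a₀ cstar ≤ ∑ v ∈ E.V, dist v cstar := by
    calc (A.card : ℝ) * dist a₀ cstar = ∑ _v ∈ A, dist a₀ cstar := by
          rw [Finset.sum_const, nsmul_eq_mul]
      _ ≤ ∑ v ∈ A, dist v cstar := Finset.sum_le_sum fun v hv => ha₀min v hv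
      _ ≤ ∑ v ∈ E.V, dist v cstar :=
          Finset.sum_le_sum_of_subset_of_nonneg (Finset.filter_subset _ _)
            (fun i _ _ => dist_nonneg)
  have hqu : (W.card : ℝ) * dist u₀ cstar ≤ ∑ v ∈ E.V, dist v cstar := by
    calc (W.card : ℝ) * dist u₀ cstar = ∑ _v ∈ W, dist u₀ cstar := by
          rw [Finset.sum_const, nsmul_eq_mul]
      _ ≤ ∑ v ∈ W, dist v cstar := Finset.sum_le_sum fun v hv => hu₀min v hv
      _ ≤ ∑ v ∈ E.V, dist v cstar :=
          Finset.sum_le_sum_of_subset_of_nonneg hWV (fun i _ _ => dist_nonneg)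
  -- per-voter distance bounds to c
  have hWb : ∀ u ∈ W, dist u c ≤ dist u cstar + 2 * dist a₀ cstar := by
    intro u huW
    have h1 := key_bound E ha₀V (hWV huW) hcC hcstar hra₀ (hWrank u huW)
    have h2 := dist_triangle u cstar a₀
    rw [dist_comm cstar a₀] at h2
    linarith
  have hcc : dist c cstar ≤ 2 * dist u₀ cstar + 2 * dist a₀ cstar := by
    have h1 := hWb u₀ hu₀W
    have h2 := dist_triangle c u₀ cstar
    rw [dist_comm c u₀] at h2
    linarith
  have hVb : ∀ v ∈ E.V,
      dist v c ≤ dist v cstar + (2 * dist u₀ cstar + 2 * dist a₀ cstar) := by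
    intro v _
    have h1 := dist_triangle v cstar c
    rw [dist_comm cstar c] at h1
    linarith
  -- total distance to c is at most 7 * OPT
  have hSc : ∑ v ∈ E.V, dist v c ≤ 7 * ∑ v ∈ E.V, dist v cstar := by
    have hsplit : ∑ v ∈ E.V \ W, dist v c + ∑ v ∈ W, dist v c = ∑ v ∈ E.V, dist v c :=
      Finset.sum_sdiff hWV
    have hsplit' :
        ∑ v ∈ E.V \ W, dist v cstar + ∑ v ∈ W, dist v cstar = ∑ v ∈ E.V, dist v cstar :=
      Finset.sum_sdiff hWV
    have h1 : ∑ v ∈ W, dist v c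
        ≤ ∑ v ∈ W, dist v cstar + (W.card : ℝ) * (2 * dist a₀ cstar) := by
      calc ∑ v ∈ W, dist v c ≤ ∑ v ∈ W, (dist v cstar + 2 * dist a₀ cstar) :=
            Finset.sum_le_sum hWb
        _ = _ := by rw [Finset.sum_add_distrib, Finset.sum_const, nsmul_eq_mul]
    have h2 : ∑ v ∈ E.V \ W, dist v c
        ≤ ∑ v ∈ E.V \ W, dist v cstar
          + ((E.V \ W).card : ℝ) * (2 * dist u₀ cstar + 2 * dist a₀ cstar) := by
      calc ∑ v ∈ E.V \ W, dist v c
          ≤ ∑ v ∈ E.V \ W, (dist v cstar + (2 * dist u₀ cstar + 2 * dist a₀ cstar)) :=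
            Finset.sum_le_sum (fun v hv => hVb v (Finset.mem_sdiff.mp hv).1)
        _ = _ := by rw [Finset.sum_add_distrib, Finset.sum_const, nsmul_eq_mul]
    have hsd : (E.V \ W).card = E.V.card - W.card := Finset.card_sdiff_of_subset hWV
    have hWk : W.card = k := by omega
    have hsdk : (E.V \ W).card = k := by omega
    have hkA : k ≤ A.card := by omega
    have hkqa : (k : ℝ) * dist a₀ cstar ≤ ∑ v ∈ E.V, dist v cstar := by
      refine le_trans ?_ hqa
      have : (k : ℝ) ≤ (A.card : ℝ) := by exact_mod_cast hkA
      nlinarith [dist_nonneg (x := a₀) (y := cstar)]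
    have hkqu : (k : ℝ) * dist u₀ cstar ≤ ∑ v ∈ E.V, dist v cstar := by
      rw [hWk] at hqu; exact hqu
    rw [hWk] at h1
    rw [hsdk] at h2
    have e1 : (k : ℝ) * (2 * dist a₀ cstar) = 2 * ((k : ℝ) * dist a₀ cstar) := by ring
    have e2 : (k : ℝ) * (2 * dist u₀ cstar + 2 * dist a₀ cstar)
        = 2 * ((k : ℝ) * dist u₀ cstar) + 2 * ((k : ℝ) * dist a₀ cstar) := by ring
    rw [e1] at h1
    rw [e2] at h2
    linarith
  -- conclude by cases on the winner
  rcases hw with ⟨hwc, _⟩ | ⟨hwc, hmaj⟩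
  · rw [hwc]; linarith
  · rw [hwc]
    have hpref : ∀ v ∈ E.V.filter (fun v => E.rank v c' ≤ E.rank v c),
        dist v c' ≤ dist v c := by
      intro v hv
      obtain ⟨hvV, hr⟩ := Finset.mem_filter.mp hv
      by_contra h
      push_neg at h
      have := E.rank_metric v hvV c hcC c' hc'C h
      omega
    have h5 := majority_bound E.V _ (Finset.filter_subset _ _) hmaj hpref
    linarith
end
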